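/- Let n ≥ 1, t > 0, and let f : ℝⁿ → ℝ be a measurable function with ε ≤ f ≤ M for some constants 0 < ε ≤ M. Then for every x ∈ ℝⁿ, t · ‖∇(P_t f)(x)‖² / P_t f(x) ≤ P_t(f log f)(x) − P_t f(x) · log(P_t f(x)) (the reverse logarithmic Sobolev inequality along the heat flow). -/

import Mathlib

open MeasureTheory Real

/-- The heat semigroup on ℝⁿ:
`P_t f(x) = (4πt)^{-n/2} ∫ f(z) exp(-‖x-z‖²/(4t)) dz`. -/
noncomputable def heatSG (n : ℕ) (t : ℝ) (f : EuclideanSpace ℝ (Fin n) → ℝ)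
    (x : EuclideanSpace ℝ (Fin n)) : ℝ :=
  (4 * π * t) ^ (-(n : ℝ) / 2) * ∫ z, f z * Real.exp (-‖x - z‖ ^ 2 / (4 * t))

set_option maxHeartbeats 1000000
set_option synthInstance.maxHeartbeats 400000

section Aux
variable {n : ℕ}
local notation "E'" => EuclideanSpace ℝ (Fin n)
variable {t : ℝ}

lemma integrable_gauss {b : ℝ} (hb : 0 < b) :
    Integrable fun v : E' => rexp (-b * ‖v‖ ^ 2) := by
  have h := (GaussianFourier.integrable_cexp_neg_mul_sq_norm_add
    (V := E') (b := (b : ℂ)) (by simpa using hb) 0 (0 : E')).norm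
  refine h.congr (Filter.Eventually.of_forall fun v => ?_)
  simp only [Complex.norm_exp]
  norm_num
  left; norm_cast

lemma integral_gauss {b : ℝ} (hb : 0 < b) :
    ∫ v : E', rexp (-b * ‖v‖ ^ 2) = (π / b) ^ ((n : ℝ) / 2) := by
  rw [GaussianFourier.integral_rexp_neg_mul_sq_norm hb, finrank_euclideanSpace_fin]

-- s ≤ exp ((b/2) s^2 + 1/(2b))
lemma le_exp_sq {b s : ℝ} (hb : 0 < b) : s ≤ rexp (b / 2 * s ^ 2 + 1 / (2 * b)) := by
  have h1 : s ≤ b / 2 * s ^ 2 + 1 / (2 * b) := by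
    have h2 : 0 ≤ (b * s - 1) ^ 2 := sq_nonneg _
    have h3 : b / 2 * s ^ 2 + 1 / (2 * b) - s = (b * s - 1) ^ 2 / (2 * b) := by
      field_simp; ring
    nlinarith [div_nonneg h2 (by positivity : (0:ℝ) ≤ 2 * b)]
  calc s ≤ b / 2 * s ^ 2 + 1 / (2 * b) := h1
    _ ≤ rexp (b / 2 * s ^ 2 + 1 / (2 * b)) := by
        have := Real.add_one_le_exp (b / 2 * s ^ 2 + 1 / (2 * b)); linarith

lemma kernel_eq (ht : 0 < t) (x z : E') :
    rexp (-‖x - z‖ ^ 2 / (4 * t)) = rexp (-(4 * t)⁻¹ * ‖z - x‖ ^ 2) := by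
  rw [norm_sub_rev]; congr 1; field_simp

lemma integrable_kernel (ht : 0 < t) (x : E') :
    Integrable fun z : E' => rexp (-‖x - z‖ ^ 2 / (4 * t)) := by
  have h := (integrable_gauss (n := n) (b := (4 * t)⁻¹) (by positivity)).comp_sub_right x
  exact h.congr (Filter.Eventually.of_forall fun z =>
    show rexp (-(4 * t)⁻¹ * ‖z - x‖ ^ 2) = rexp (-‖x - z‖ ^ 2 / (4 * t)) from
      (kernel_eq ht x z).symm)

lemma integrable_norm_kernel (ht : 0 < t) (x : E') :
    Integrable fun z : E' => ‖z - x‖ * rexp (-‖x - z‖ ^ 2 / (4 * t)) := by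
  have hb : (0:ℝ) < (4 * t)⁻¹ := by positivity
  have h := (((integrable_gauss (n := n) (b := (4 * t)⁻¹ / 2)
    (by positivity)).comp_sub_right x).const_mul (rexp (1 / (2 * (4 * t)⁻¹))))
  refine h.mono ?_ (Filter.Eventually.of_forall fun z => ?_)
  · apply Measurable.aestronglyMeasurable
    exact ((measurable_id.sub_const x).norm).mul
      ((measurable_const.sub measurable_id).norm.pow_const 2 |>.neg.div_const _ |>.exp)
  · have h0 : (0:ℝ) ≤ ‖z - x‖ := norm_nonneg _
    rw [Real.norm_eq_abs, abs_of_nonneg (by positivity), kernel_eq ht x z]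
    have hs := le_exp_sq (b := (4 * t)⁻¹) (s := ‖z - x‖) hb
    have : ‖z - x‖ * rexp (-(4 * t)⁻¹ * ‖z - x‖ ^ 2)
        ≤ rexp (1 / (2 * (4 * t)⁻¹)) * rexp (-((4 * t)⁻¹ / 2) * ‖z - x‖ ^ 2) := by
      calc ‖z - x‖ * rexp (-(4 * t)⁻¹ * ‖z - x‖ ^ 2)
          ≤ rexp ((4 * t)⁻¹ / 2 * ‖z - x‖ ^ 2 + 1 / (2 * (4 * t)⁻¹))
              * rexp (-(4 * t)⁻¹ * ‖z - x‖ ^ 2) :=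
            mul_le_mul_of_nonneg_right hs (le_of_lt (Real.exp_pos _))
        _ = rexp (1 / (2 * (4 * t)⁻¹)) * rexp (-((4 * t)⁻¹ / 2) * ‖z - x‖ ^ 2) := by
            rw [← Real.exp_add, ← Real.exp_add]; ring_nf
    calc ‖z - x‖ * rexp (-(4 * t)⁻¹ * ‖z - x‖ ^ 2)
        ≤ rexp (1 / (2 * (4 * t)⁻¹)) * rexp (-((4 * t)⁻¹ / 2) * ‖z - x‖ ^ 2) := this
      _ ≤ ‖rexp (1 / (2 * (4 * t)⁻¹)) * rexp (-((4 * t)⁻¹ / 2) * ‖z - x‖ ^ 2)‖ :=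
          le_abs_self _

lemma tilt_key (ht : 0 < t) (x w z : E') :
    -‖x - z‖ ^ 2 / (4 * t) + (inner ℝ (z - x) w : ℝ) / (2 * t)
      = -(4 * t)⁻¹ * ‖(z - x) - w‖ ^ 2 + ‖w‖ ^ 2 / (4 * t) := by
  have hn := norm_sub_sq_real (z - x) w
  rw [norm_sub_rev x z]
  set i : ℝ := inner ℝ (z - x) w with hi
  rw [hn]
  field_simp
  ring

lemma integrable_tilt (ht : 0 < t) (x w : E') :
    Integrable fun z : E' =>
      rexp (-‖x - z‖ ^ 2 / (4 * t) + (inner ℝ (z - x) w : ℝ) / (2 * t)) := by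
  have h := (((integrable_gauss (n := n) (b := (4 * t)⁻¹) (by positivity)).comp_sub_right
    w).comp_sub_right x).const_mul (rexp (‖w‖ ^ 2 / (4 * t)))
  refine h.congr (Filter.Eventually.of_forall fun z => ?_)
  show rexp (‖w‖ ^ 2 / (4 * t)) * rexp (-(4 * t)⁻¹ * ‖z - x - w‖ ^ 2)
      = rexp (-‖x - z‖ ^ 2 / (4 * t) + (inner ℝ (z - x) w : ℝ) / (2 * t))
  rw [tilt_key ht x w z, Real.exp_add, mul_comm]

lemma integral_tilt (ht : 0 < t) (x w : E') :
    ∫ z : E', rexp (-‖x - z‖ ^ 2 / (4 * t) + (inner ℝ (z - x) w : ℝ) / (2 * t))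
      = (4 * π * t) ^ ((n : ℝ) / 2) * rexp (‖w‖ ^ 2 / (4 * t)) := by
  calc ∫ z : E', rexp (-‖x - z‖ ^ 2 / (4 * t) + (inner ℝ (z - x) w : ℝ) / (2 * t))
      = ∫ z : E', rexp (‖w‖ ^ 2 / (4 * t)) * rexp (-(4 * t)⁻¹ * ‖(z - x) - w‖ ^ 2) := by
        congr 1; ext z; rw [tilt_key ht x w z, Real.exp_add, mul_comm]
    _ = rexp (‖w‖ ^ 2 / (4 * t)) * ∫ z : E', rexp (-(4 * t)⁻¹ * ‖(z - x) - w‖ ^ 2) :=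
        integral_const_mul _ _
    _ = rexp (‖w‖ ^ 2 / (4 * t)) * ∫ v : E', rexp (-(4 * t)⁻¹ * ‖v‖ ^ 2) := by
        congr 1
        have h1 : (fun z : E' => rexp (-(4 * t)⁻¹ * ‖(z - x) - w‖ ^ 2))
            = fun z : E' => rexp (-(4 * t)⁻¹ * ‖z - (x + w)‖ ^ 2) := by
          ext z; rw [sub_sub]
        rw [h1]
        exact integral_sub_right_eq_self (fun v : E' => rexp (-(4 * t)⁻¹ * ‖v‖ ^ 2)) (x + w)
    _ = (4 * π * t) ^ ((n : ℝ) / 2) * rexp (‖w‖ ^ 2 / (4 * t)) := by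
        rw [integral_gauss (by positivity), mul_comm]
        congr 2
        rw [div_eq_mul_inv, inv_inv]
        ring
lemma measurable_kernel (y : E') (t : ℝ) :
    Measurable fun z : E' => rexp (-‖y - z‖ ^ 2 / (4 * t)) :=
  (((measurable_const.sub measurable_id).norm.pow_const 2).neg.div_const _).exp

lemma integrable_bdd_kernel (ht : 0 < t) {g : E' → ℝ} (hg : Measurable g) {B : ℝ}
    (hB : ∀ z, |g z| ≤ B) (x : E') :
    Integrable fun z : E' => g z * rexp (-‖x - z‖ ^ 2 / (4 * t)) := by
  refine ((integrable_kernel ht x).const_mul B).mono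
    (hg.mul (measurable_kernel x t)).aestronglyMeasurable
    (Filter.Eventually.of_forall fun z => ?_)
  have hKpos : 0 < rexp (-‖x - z‖ ^ 2 / (4 * t)) := Real.exp_pos _
  rw [Real.norm_eq_abs, Real.norm_eq_abs, abs_mul, abs_of_pos hKpos]
  have hBnn : 0 ≤ B := le_trans (abs_nonneg _) (hB z)
  rw [abs_of_nonneg (by positivity : (0:ℝ) ≤ B * rexp (-‖x - z‖ ^ 2 / (4 * t)))]
  exact mul_le_mul_of_nonneg_right (hB z) hKpos.le

/-- The pointwise derivative (in `y`) of `fun y => c * exp (-‖y - z‖²/(4t))`. -/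
lemma kernel_hasFDerivAt (ht : 0 < t) (c : ℝ) (z y : E') :
    HasFDerivAt (fun y : E' => c * rexp (-‖y - z‖ ^ 2 / (4 * t)))
      ((c * rexp (-‖y - z‖ ^ 2 / (4 * t)) * (2 * t)⁻¹) • (innerSL ℝ (z - y))) y := by
  have h1 : HasFDerivAt (fun y : E' => ‖y - z‖ ^ 2)
      (2 • (innerSL ℝ (y - z)).comp (ContinuousLinearMap.id ℝ _)) y :=
    ((hasFDerivAt_id y).sub_const z).norm_sq
  have h2 := ((h1.const_mul (-(4 * t)⁻¹)).exp).const_mul c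
  have heq : (fun y : E' => c * rexp (-(4 * t)⁻¹ * ‖y - z‖ ^ 2))
      = fun y : E' => c * rexp (-‖y - z‖ ^ 2 / (4 * t)) := by
    funext u; congr 2; field_simp
  rw [heq] at h2
  refine h2.congr_fderiv ?_
  ext u
  have hinner : (inner ℝ (z - y) u : ℝ) = -(inner ℝ (y - z) u : ℝ) := by
    rw [← inner_neg_left]; congr 1; abel
  have h4 : -‖y - z‖ ^ 2 / (4 * t) = -(4 * t)⁻¹ * ‖y - z‖ ^ 2 := by field_simp
  simp only [ContinuousLinearMap.smul_apply, ContinuousLinearMap.coe_comp',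
    Function.comp_apply, ContinuousLinearMap.coe_id', id_eq, innerSL_apply_apply, smul_eq_mul,
    hinner, h4]
  field_simp
  ring

set_option maxHeartbeats 1000000
set_option synthInstance.maxHeartbeats 400000

lemma innerSL_sub_meas (x : E') :
    AEStronglyMeasurable (fun z : E' => innerSL ℝ (z - x)) volume :=
  (((innerSL ℝ).continuous).comp (continuous_id.sub continuous_const)).aestronglyMeasurable

lemma integrable_Fprime (ht : 0 < t) {f : E' → ℝ} (hf : Measurable f) {M : ℝ}
    (hM : ∀ z, |f z| ≤ M) (x : E') :
    Integrable fun z : E' =>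
      (f z * rexp (-‖x - z‖ ^ 2 / (4 * t)) * (2 * t)⁻¹) • (innerSL ℝ (z - x)) := by
  have hMnn : 0 ≤ M := le_trans (abs_nonneg _) (hM 0)
  refine ((integrable_norm_kernel ht x).const_mul (M * (2 * t)⁻¹)).mono
    (((hf.mul (measurable_kernel x t)).mul_const _).aestronglyMeasurable.smul
      (innerSL_sub_meas x)) (Filter.Eventually.of_forall fun z => ?_)
  rw [norm_smul (f z * rexp (-‖x - z‖ ^ 2 / (4 * t)) * (2 * t)⁻¹) (innerSL ℝ (z - x)),
    innerSL_apply_norm]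
  have hK : (0:ℝ) < rexp (-‖x - z‖ ^ 2 / (4 * t)) := Real.exp_pos _
  have h2t : (0:ℝ) < (2 * t)⁻¹ := by positivity
  have h1 : ‖f z * rexp (-‖x - z‖ ^ 2 / (4 * t)) * (2 * t)⁻¹‖
      ≤ M * (2 * t)⁻¹ * rexp (-‖x - z‖ ^ 2 / (4 * t)) := by
    rw [Real.norm_eq_abs, abs_mul, abs_mul, abs_of_pos hK, abs_of_pos h2t]
    nlinarith [mul_le_mul_of_nonneg_right (hM z) hK.le]
  calc ‖f z * rexp (-‖x - z‖ ^ 2 / (4 * t)) * (2 * t)⁻¹‖ * ‖z - x‖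
      ≤ M * (2 * t)⁻¹ * rexp (-‖x - z‖ ^ 2 / (4 * t)) * ‖z - x‖ :=
        mul_le_mul_of_nonneg_right h1 (norm_nonneg _)
    _ = M * (2 * t)⁻¹ * (‖z - x‖ * rexp (-‖x - z‖ ^ 2 / (4 * t))) := by ring
    _ ≤ ‖M * (2 * t)⁻¹ * (‖z - x‖ * rexp (-‖x - z‖ ^ 2 / (4 * t)))‖ := le_abs_self _

lemma heat_int_hasFDerivAt (ht : 0 < t) {f : E' → ℝ} (hf : Measurable f) {M : ℝ}
    (hM : ∀ z, |f z| ≤ M) (x : E') :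
    HasFDerivAt (fun y : E' => ∫ z : E', f z * rexp (-‖y - z‖ ^ 2 / (4 * t)))
      (∫ z : E', (f z * rexp (-‖x - z‖ ^ 2 / (4 * t)) * (2 * t)⁻¹) • (innerSL ℝ (z - x))) x := by
  have hMnn : 0 ≤ M := le_trans (abs_nonneg _) (hM 0)
  have h := hasFDerivAt_integral_of_dominated_of_fderiv_le
    (F := fun y (z : E') => f z * rexp (-‖y - z‖ ^ 2 / (4 * t)))
    (F' := fun y (z : E') =>
      (f z * rexp (-‖y - z‖ ^ 2 / (4 * t)) * (2 * t)⁻¹) • (innerSL ℝ (z - y)))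
    (x₀ := x) (bound := fun z =>
      (M * (2 * t)⁻¹ * rexp (1 / (4 * t)) * (rexp (4 * t) + 1)) *
        rexp (-(16 * t)⁻¹ * ‖z - x‖ ^ 2))
    (μ := volume) (s := Metric.ball x 1) (Metric.ball_mem_nhds x one_pos)
    ?_ ?_ ?_ ?_ ?_ ?_
  · exact h
  · exact Filter.Eventually.of_forall fun y =>
      (hf.mul (measurable_kernel y t)).aestronglyMeasurable
  · exact integrable_bdd_kernel ht hf hM x
  · exact ((hf.mul (measurable_kernel x t)).mul_const _).aestronglyMeasurable.smul
      (innerSL_sub_meas x)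
  · refine Filter.Eventually.of_forall fun z => fun y hy => ?_
    have hdist : ‖y - x‖ < 1 := by
      simpa [dist_eq_norm] using Metric.mem_ball.mp hy
    set s := ‖z - x‖ with hs
    have hs0 : 0 ≤ s := norm_nonneg _
    have hzy : ‖z - y‖ ≤ s + 1 := by
      have hxy : ‖x - y‖ ≤ 1 := by rw [norm_sub_rev]; exact hdist.le
      calc ‖z - y‖ = ‖(z - x) + (x - y)‖ := by congr 1; abel
        _ ≤ ‖z - x‖ + ‖x - y‖ := norm_add_le _ _
        _ ≤ s + 1 := add_le_add le_rfl hxy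
    have hyz2 : s ^ 2 / 2 - 1 ≤ ‖y - z‖ ^ 2 := by
      have hge : s - 1 ≤ ‖y - z‖ := by
        have h5 : s ≤ ‖z - y‖ + ‖y - x‖ := by
          calc s = ‖(z - y) + (y - x)‖ := by rw [hs]; congr 1; abel
            _ ≤ ‖z - y‖ + ‖y - x‖ := norm_add_le _ _
        rw [norm_sub_rev y z]; linarith
      rcases le_or_gt s 1 with hc | hc
      · nlinarith [sq_nonneg (‖y - z‖ : ℝ)]
      · have h0 : (0:ℝ) ≤ s - 1 := by linarith
        have := mul_self_le_mul_self h0 hge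
        nlinarith [sq_nonneg (s - 2)]
    have h4t : (0:ℝ) < 4 * t := by positivity
    have hKb : rexp (-‖y - z‖ ^ 2 / (4 * t))
        ≤ rexp (1 / (4 * t)) * rexp (-(8 * t)⁻¹ * s ^ 2) := by
      rw [← Real.exp_add]
      apply Real.exp_le_exp.mpr
      have heq2 : 1 / (4 * t) + -(8 * t)⁻¹ * s ^ 2 = (1 - s ^ 2 / 2) / (4 * t) := by
        field_simp; ring
      rw [heq2]
      exact (div_le_div_iff_of_pos_right h4t).mpr (by linarith)
    have hsb : s + 1 ≤ (rexp (4 * t) + 1) * rexp ((16 * t)⁻¹ * s ^ 2) := by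
      have h1 := le_exp_sq (b := (8 * t)⁻¹) (s := s) (by positivity)
      have h2 : (8 * t)⁻¹ / 2 * s ^ 2 + 1 / (2 * (8 * t)⁻¹)
          = (16 * t)⁻¹ * s ^ 2 + 4 * t := by field_simp; ring
      rw [h2] at h1
      have h3 : (1:ℝ) ≤ rexp ((16 * t)⁻¹ * s ^ 2) :=
        Real.one_le_exp (by positivity)
      have h4 : rexp ((16 * t)⁻¹ * s ^ 2 + 4 * t)
          = rexp (4 * t) * rexp ((16 * t)⁻¹ * s ^ 2) := by
        rw [← Real.exp_add]; ring_nf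
      nlinarith [Real.exp_pos ((16 * t)⁻¹ * s ^ 2)]
    beta_reduce
    rw [norm_smul (f z * rexp (-‖y - z‖ ^ 2 / (4 * t)) * (2 * t)⁻¹) (innerSL ℝ (z - y)),
      innerSL_apply_norm]
    have hK : (0:ℝ) < rexp (-‖y - z‖ ^ 2 / (4 * t)) := Real.exp_pos _
    have h2t : (0:ℝ) < (2 * t)⁻¹ := by positivity
    have hnorm1 : ‖f z * rexp (-‖y - z‖ ^ 2 / (4 * t)) * (2 * t)⁻¹‖
        ≤ M * (2 * t)⁻¹ * rexp (-‖y - z‖ ^ 2 / (4 * t)) := by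
      rw [Real.norm_eq_abs, abs_mul, abs_mul, abs_of_pos hK, abs_of_pos h2t]
      nlinarith [mul_le_mul_of_nonneg_right (hM z) hK.le]
    have hexpcomb : rexp (-(8 * t)⁻¹ * s ^ 2) * rexp ((16 * t)⁻¹ * s ^ 2)
        = rexp (-(16 * t)⁻¹ * s ^ 2) := by
      rw [← Real.exp_add]; congr 1; field_simp; ring
    calc ‖f z * rexp (-‖y - z‖ ^ 2 / (4 * t)) * (2 * t)⁻¹‖ * ‖z - y‖
        ≤ (M * (2 * t)⁻¹ * rexp (-‖y - z‖ ^ 2 / (4 * t))) * (s + 1) :=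
          mul_le_mul hnorm1 hzy (norm_nonneg _) (by positivity)
      _ ≤ (M * (2 * t)⁻¹ * (rexp (1 / (4 * t)) * rexp (-(8 * t)⁻¹ * s ^ 2))) *
            ((rexp (4 * t) + 1) * rexp ((16 * t)⁻¹ * s ^ 2)) :=
          mul_le_mul (mul_le_mul_of_nonneg_left hKb (by positivity)) hsb
            (by positivity) (by positivity)
      _ = (M * (2 * t)⁻¹ * rexp (1 / (4 * t)) * (rexp (4 * t) + 1)) *
            (rexp (-(8 * t)⁻¹ * s ^ 2) * rexp ((16 * t)⁻¹ * s ^ 2)) := by ring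
      _ = (M * (2 * t)⁻¹ * rexp (1 / (4 * t)) * (rexp (4 * t) + 1)) *
            rexp (-(16 * t)⁻¹ * s ^ 2) := by rw [hexpcomb]
  · exact ((integrable_gauss (n := n) (b := (16 * t)⁻¹)
      (by positivity)).comp_sub_right x).const_mul _
  · exact Filter.Eventually.of_forall fun z => fun y hy => kernel_hasFDerivAt ht (f z) z y

lemma young_pt {u c b : ℝ} (hu : 0 < u) (hc : 0 < c) :
    u * b ≤ u * Real.log u - u * Real.log c - u + c * rexp b := by
  have h := Real.add_one_le_exp (b - Real.log (u / c))
  have he : rexp (b - Real.log (u / c)) = rexp b * (c / u) := by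
    rw [Real.exp_sub, Real.exp_log (by positivity)]
    field_simp
  rw [he, Real.log_div (ne_of_gt hu) (ne_of_gt hc)] at h
  have key := mul_le_mul_of_nonneg_left h hu.le
  have hru : u * (rexp b * (c / u)) = c * rexp b := by field_simp
  rw [hru] at key
  nlinarith [key]

lemma integral_kernel (ht : 0 < t) (x : E') :
    ∫ z : E', rexp (-‖x - z‖ ^ 2 / (4 * t)) = (4 * π * t) ^ ((n : ℝ) / 2) := by
  have h := integral_tilt ht x (0 : E')
  simp only [inner_zero_right, zero_div, add_zero, norm_zero] at h
  simpa using h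

lemma C_mul_kernel (ht : 0 < t) :
    (4 * π * t) ^ (-(n : ℝ) / 2) * (4 * π * t) ^ ((n : ℝ) / 2) = 1 := by
  rw [← Real.rpow_add (by positivity)]
  rw [show -(n : ℝ) / 2 + (n : ℝ) / 2 = 0 by ring, Real.rpow_zero]

lemma C_pos (ht : 0 < t) : (0:ℝ) < (4 * π * t) ^ (-(n : ℝ) / 2) :=
  Real.rpow_pos_of_pos (by positivity) _

lemma heatSG_ge (ht : 0 < t) {f : E' → ℝ} (hf : Measurable f) {ε M : ℝ} (hε : 0 < ε)
    (hfb : ∀ z, ε ≤ f z ∧ f z ≤ M) (x : E') : ε ≤ heatSG n t f x := by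
  have hM0 : 0 < M := lt_of_lt_of_le hε (le_trans (hfb 0).1 (hfb 0).2)
  have habs : ∀ z, |f z| ≤ M := fun z =>
    abs_le.mpr ⟨by linarith [(hfb z).1], (hfb z).2⟩
  have hint : Integrable fun z : E' => f z * rexp (-‖x - z‖ ^ 2 / (4 * t)) :=
    integrable_bdd_kernel ht hf habs x
  have hmono : ∫ z : E', ε * rexp (-‖x - z‖ ^ 2 / (4 * t))
      ≤ ∫ z : E', f z * rexp (-‖x - z‖ ^ 2 / (4 * t)) := by
    refine integral_mono ((integrable_kernel ht x).const_mul ε) hint fun z => ?_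
    exact mul_le_mul_of_nonneg_right (hfb z).1 (Real.exp_pos _).le
  have h1 : ∫ z : E', ε * rexp (-‖x - z‖ ^ 2 / (4 * t)) = ε * (4 * π * t) ^ ((n : ℝ) / 2) := by
    rw [integral_const_mul, integral_kernel ht x]
  have hC := C_pos (n := n) ht
  have := mul_le_mul_of_nonneg_left hmono hC.le
  rw [h1] at this
  calc ε = (4 * π * t) ^ (-(n : ℝ) / 2) * (ε * (4 * π * t) ^ ((n : ℝ) / 2)) := by
        rw [← mul_assoc, mul_comm ((4 * π * t) ^ (-(n : ℝ) / 2)) ε, mul_assoc,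
          C_mul_kernel ht, mul_one]
    _ ≤ heatSG n t f x := this

lemma integrable_inner_kernel (ht : 0 < t) {f : E' → ℝ} (hf : Measurable f) {M : ℝ}
    (habs : ∀ z, |f z| ≤ M) (x w : E') :
    Integrable fun z : E' =>
      f z * ((inner ℝ (z - x) w : ℝ) / (2 * t)) * rexp (-‖x - z‖ ^ 2 / (4 * t)) := by
  have hM0 : 0 ≤ M := le_trans (abs_nonneg _) (habs 0)
  have hmeasi : Measurable fun z : E' => (inner ℝ (z - x) w : ℝ) :=
    ((continuous_id.sub continuous_const).inner continuous_const).measurable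
  refine ((integrable_norm_kernel ht x).const_mul (M * ‖w‖ * (2 * t)⁻¹)).mono
    (((hf.mul (hmeasi.div_const _)).mul (measurable_kernel x t)).aestronglyMeasurable)
    (Filter.Eventually.of_forall fun z => ?_)
  have hK : (0:ℝ) < rexp (-‖x - z‖ ^ 2 / (4 * t)) := Real.exp_pos _
  have h2t : (0:ℝ) < (2 * t)⁻¹ := by positivity
  have hi : |(inner ℝ (z - x) w : ℝ)| ≤ ‖z - x‖ * ‖w‖ := abs_real_inner_le_norm _ _
  rw [Real.norm_eq_abs, abs_mul, abs_mul, abs_div, abs_of_pos hK,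
    abs_of_pos (by positivity : (0:ℝ) < 2 * t)]
  have step : |f z| * (|(inner ℝ (z - x) w : ℝ)| / (2 * t))
      ≤ M * (‖z - x‖ * ‖w‖) * (2 * t)⁻¹ := by
    rw [div_eq_mul_inv, ← mul_assoc]
    have := mul_le_mul (habs z) hi (abs_nonneg _) hM0
    exact mul_le_mul_of_nonneg_right this h2t.le
  calc |f z| * (|(inner ℝ (z - x) w : ℝ)| / (2 * t)) * rexp (-‖x - z‖ ^ 2 / (4 * t))
      ≤ M * (‖z - x‖ * ‖w‖) * (2 * t)⁻¹ * rexp (-‖x - z‖ ^ 2 / (4 * t)) :=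
        mul_le_mul_of_nonneg_right step hK.le
    _ = M * ‖w‖ * (2 * t)⁻¹ * (‖z - x‖ * rexp (-‖x - z‖ ^ 2 / (4 * t))) := by ring
    _ ≤ ‖M * ‖w‖ * (2 * t)⁻¹ * (‖z - x‖ * rexp (-‖x - z‖ ^ 2 / (4 * t)))‖ := le_abs_self _

lemma core_ineq (ht : 0 < t) {f : E' → ℝ} (hf : Measurable f) {ε M : ℝ} (hε : 0 < ε)
    (hfb : ∀ z, ε ≤ f z ∧ f z ≤ M) (x w : E') :
    (4 * π * t) ^ (-(n : ℝ) / 2) *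
        ∫ z : E', f z * ((inner ℝ (z - x) w : ℝ) / (2 * t)) * rexp (-‖x - z‖ ^ 2 / (4 * t))
      ≤ (heatSG n t (fun z => f z * Real.log (f z)) x
          - heatSG n t f x * Real.log (heatSG n t f x))
        + heatSG n t f x * (‖w‖ ^ 2 / (4 * t)) := by
  have hM0 : 0 < M := lt_of_lt_of_le hε (le_trans (hfb 0).1 (hfb 0).2)
  have habs : ∀ z, |f z| ≤ M := fun z => abs_le.mpr ⟨by linarith [(hfb z).1], (hfb z).2⟩
  set C : ℝ := (4 * π * t) ^ (-(n : ℝ) / 2) with hCdef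
  have hC : 0 < C := C_pos ht
  set c : ℝ := heatSG n t f x with hcdef
  have hc : 0 < c := lt_of_lt_of_le hε (heatSG_ge ht hf hε hfb x)
  set L : ℝ := ‖w‖ ^ 2 / (4 * t) with hLdef
  -- measurable/integrable pieces
  have hmeasflog : Measurable fun z : E' => f z * Real.log (f z) :=
    hf.mul (Real.measurable_log.comp hf)
  have hflogabs : ∀ z, |f z * Real.log (f z)| ≤ M * (|Real.log ε| + |Real.log M|) := by
    intro z
    have h1 : Real.log ε ≤ Real.log (f z) := Real.log_le_log hε (hfb z).1
    have h2 : Real.log (f z) ≤ Real.log M := Real.log_le_log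
      (lt_of_lt_of_le hε (hfb z).1) (hfb z).2
    have h3 : |Real.log (f z)| ≤ |Real.log ε| + |Real.log M| := by
      rw [abs_le]
      constructor
      · calc -(|Real.log ε| + |Real.log M|) ≤ -|Real.log ε| := by
              linarith [abs_nonneg (Real.log M)]
          _ ≤ Real.log ε := neg_abs_le _
          _ ≤ Real.log (f z) := h1
      · calc Real.log (f z) ≤ Real.log M := h2
          _ ≤ |Real.log M| := le_abs_self _
          _ ≤ |Real.log ε| + |Real.log M| := by linarith [abs_nonneg (Real.log ε)]
    rw [abs_mul]
    exact mul_le_mul (habs z) h3 (abs_nonneg _) hM0.le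
  have IfK : Integrable fun z : E' => f z * rexp (-‖x - z‖ ^ 2 / (4 * t)) :=
    integrable_bdd_kernel ht hf habs x
  have IflogK : Integrable fun z : E' =>
      (f z * Real.log (f z)) * rexp (-‖x - z‖ ^ 2 / (4 * t)) :=
    integrable_bdd_kernel ht hmeasflog hflogabs x
  have Iih : Integrable fun z : E' =>
      f z * ((inner ℝ (z - x) w : ℝ) / (2 * t)) * rexp (-‖x - z‖ ^ 2 / (4 * t)) :=
    integrable_inner_kernel ht hf habs x w
  have ItiltK : Integrable fun z : E' =>
      rexp ((inner ℝ (z - x) w : ℝ) / (2 * t) - L) * rexp (-‖x - z‖ ^ 2 / (4 * t)) := by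
    refine ((integrable_tilt ht x w).const_mul (rexp (-L))).congr
      (Filter.Eventually.of_forall fun z => ?_)
    show rexp (-L) * rexp (-‖x - z‖ ^ 2 / (4 * t) + (inner ℝ (z - x) w : ℝ) / (2 * t))
        = rexp ((inner ℝ (z - x) w : ℝ) / (2 * t) - L) * rexp (-‖x - z‖ ^ 2 / (4 * t))
    rw [← Real.exp_add, ← Real.exp_add]
    congr 1
    ring
  have ItiltVal : (∫ z : E',
      rexp ((inner ℝ (z - x) w : ℝ) / (2 * t) - L) * rexp (-‖x - z‖ ^ 2 / (4 * t)))
      = (4 * π * t) ^ ((n : ℝ) / 2) := by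
    have he : (fun z : E' =>
        rexp ((inner ℝ (z - x) w : ℝ) / (2 * t) - L) * rexp (-‖x - z‖ ^ 2 / (4 * t)))
        = fun z : E' => rexp (-L) *
            rexp (-‖x - z‖ ^ 2 / (4 * t) + (inner ℝ (z - x) w : ℝ) / (2 * t)) := by
      funext z
      rw [← Real.exp_add, ← Real.exp_add]
      congr 1
      ring
    rw [he, integral_const_mul, integral_tilt ht x w, hLdef]
    rw [← mul_assoc, mul_comm (rexp (-(‖w‖ ^ 2 / (4 * t)))) _, mul_assoc, ← Real.exp_add]
    simp
  -- pointwise Young inequality, decomposed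
  have hpt : ∀ z : E',
      f z * ((inner ℝ (z - x) w : ℝ) / (2 * t)) * rexp (-‖x - z‖ ^ 2 / (4 * t))
          - L * (f z * rexp (-‖x - z‖ ^ 2 / (4 * t)))
        ≤ ((f z * Real.log (f z)) * rexp (-‖x - z‖ ^ 2 / (4 * t))
            - Real.log c * (f z * rexp (-‖x - z‖ ^ 2 / (4 * t)))
            - f z * rexp (-‖x - z‖ ^ 2 / (4 * t)))
          + c * (rexp ((inner ℝ (z - x) w : ℝ) / (2 * t) - L)
              * rexp (-‖x - z‖ ^ 2 / (4 * t))) := by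
    intro z
    have hu : 0 < f z := lt_of_lt_of_le hε (hfb z).1
    have hyoung := young_pt (u := f z) (c := c) (b := (inner ℝ (z - x) w : ℝ) / (2 * t) - L) hu hc
    have hK : (0:ℝ) < rexp (-‖x - z‖ ^ 2 / (4 * t)) := Real.exp_pos _
    have h1 := mul_le_mul_of_nonneg_right hyoung hK.le
    nlinarith [h1]
  have hmono : (∫ z : E',
        (f z * ((inner ℝ (z - x) w : ℝ) / (2 * t)) * rexp (-‖x - z‖ ^ 2 / (4 * t))
          - L * (f z * rexp (-‖x - z‖ ^ 2 / (4 * t)))))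
      ≤ ∫ z : E',
        (((f z * Real.log (f z)) * rexp (-‖x - z‖ ^ 2 / (4 * t))
            - Real.log c * (f z * rexp (-‖x - z‖ ^ 2 / (4 * t)))
            - f z * rexp (-‖x - z‖ ^ 2 / (4 * t)))
          + c * (rexp ((inner ℝ (z - x) w : ℝ) / (2 * t) - L)
              * rexp (-‖x - z‖ ^ 2 / (4 * t)))) :=
    integral_mono
      (Iih.sub (IfK.const_mul L))
      (((IflogK.sub (IfK.const_mul (Real.log c))).sub IfK).add (ItiltK.const_mul c))
      hpt
  -- split the integrals via explicit linearity equalities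
  have hL1 : (∫ z : E',
        (f z * ((inner ℝ (z - x) w : ℝ) / (2 * t)) * rexp (-‖x - z‖ ^ 2 / (4 * t))
          - L * (f z * rexp (-‖x - z‖ ^ 2 / (4 * t)))))
      = (∫ z : E', f z * ((inner ℝ (z - x) w : ℝ) / (2 * t)) * rexp (-‖x - z‖ ^ 2 / (4 * t)))
        - ∫ z : E', L * (f z * rexp (-‖x - z‖ ^ 2 / (4 * t))) :=
    integral_sub Iih (IfK.const_mul L)
  have hL2 : (∫ z : E', L * (f z * rexp (-‖x - z‖ ^ 2 / (4 * t))))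
      = L * ∫ z : E', f z * rexp (-‖x - z‖ ^ 2 / (4 * t)) :=
    integral_const_mul _ _
  have hR1 : (∫ z : E',
        (((f z * Real.log (f z)) * rexp (-‖x - z‖ ^ 2 / (4 * t))
            - Real.log c * (f z * rexp (-‖x - z‖ ^ 2 / (4 * t)))
            - f z * rexp (-‖x - z‖ ^ 2 / (4 * t)))
          + c * (rexp ((inner ℝ (z - x) w : ℝ) / (2 * t) - L)
              * rexp (-‖x - z‖ ^ 2 / (4 * t)))))
      = (∫ z : E',
          ((f z * Real.log (f z)) * rexp (-‖x - z‖ ^ 2 / (4 * t))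
            - Real.log c * (f z * rexp (-‖x - z‖ ^ 2 / (4 * t)))
            - f z * rexp (-‖x - z‖ ^ 2 / (4 * t))))
        + ∫ z : E', c * (rexp ((inner ℝ (z - x) w : ℝ) / (2 * t) - L)
            * rexp (-‖x - z‖ ^ 2 / (4 * t))) :=
    integral_add ((IflogK.sub (IfK.const_mul (Real.log c))).sub IfK) (ItiltK.const_mul c)
  have hR2 : (∫ z : E',
        ((f z * Real.log (f z)) * rexp (-‖x - z‖ ^ 2 / (4 * t))
          - Real.log c * (f z * rexp (-‖x - z‖ ^ 2 / (4 * t)))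
          - f z * rexp (-‖x - z‖ ^ 2 / (4 * t))))
      = (∫ z : E',
          ((f z * Real.log (f z)) * rexp (-‖x - z‖ ^ 2 / (4 * t))
            - Real.log c * (f z * rexp (-‖x - z‖ ^ 2 / (4 * t)))))
        - ∫ z : E', f z * rexp (-‖x - z‖ ^ 2 / (4 * t)) :=
    integral_sub (IflogK.sub (IfK.const_mul (Real.log c))) IfK
  have hR3 : (∫ z : E',
        ((f z * Real.log (f z)) * rexp (-‖x - z‖ ^ 2 / (4 * t))
          - Real.log c * (f z * rexp (-‖x - z‖ ^ 2 / (4 * t)))))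
      = (∫ z : E', (f z * Real.log (f z)) * rexp (-‖x - z‖ ^ 2 / (4 * t)))
        - ∫ z : E', Real.log c * (f z * rexp (-‖x - z‖ ^ 2 / (4 * t))) :=
    integral_sub IflogK (IfK.const_mul (Real.log c))
  have hR4 : (∫ z : E', Real.log c * (f z * rexp (-‖x - z‖ ^ 2 / (4 * t))))
      = Real.log c * ∫ z : E', f z * rexp (-‖x - z‖ ^ 2 / (4 * t)) :=
    integral_const_mul _ _
  have hR5 : (∫ z : E', c * (rexp ((inner ℝ (z - x) w : ℝ) / (2 * t) - L)
        * rexp (-‖x - z‖ ^ 2 / (4 * t))))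
      = c * ∫ z : E', rexp ((inner ℝ (z - x) w : ℝ) / (2 * t) - L)
          * rexp (-‖x - z‖ ^ 2 / (4 * t)) :=
    integral_const_mul _ _
  rw [hL1, hL2, hR1, hR2, hR3, hR4, hR5, ItiltVal] at hmono
  -- multiply by C and conclude
  have hmul := mul_le_mul_of_nonneg_left hmono hC.le
  have hQ : C * ∫ z : E', (f z * Real.log (f z)) * rexp (-‖x - z‖ ^ 2 / (4 * t))
      = heatSG n t (fun z => f z * Real.log (f z)) x := rfl
  have hcc : C * ∫ z : E', f z * rexp (-‖x - z‖ ^ 2 / (4 * t)) = c := rfl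
  have hone : C * (4 * π * t) ^ ((n : ℝ) / 2) = 1 := C_mul_kernel ht
  have key : C * ((∫ z : E', f z * ((inner ℝ (z - x) w : ℝ) / (2 * t))
        * rexp (-‖x - z‖ ^ 2 / (4 * t)))
        - L * ∫ z : E', f z * rexp (-‖x - z‖ ^ 2 / (4 * t)))
      = C * (∫ z : E', f z * ((inner ℝ (z - x) w : ℝ) / (2 * t))
          * rexp (-‖x - z‖ ^ 2 / (4 * t))) - L * c := by
    linear_combination (-L) * hcc
  have key2 : C * ((((∫ z : E', (f z * Real.log (f z)) * rexp (-‖x - z‖ ^ 2 / (4 * t)))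
          - Real.log c * ∫ z : E', f z * rexp (-‖x - z‖ ^ 2 / (4 * t)))
          - ∫ z : E', f z * rexp (-‖x - z‖ ^ 2 / (4 * t)))
        + c * (4 * π * t) ^ ((n : ℝ) / 2))
      = heatSG n t (fun z => f z * Real.log (f z)) x - Real.log c * c - c + c := by
    linear_combination hQ - Real.log c * hcc - hcc + c * hone
  rw [key, key2] at hmul
  linarith [hmul]

end Aux

/-- Reverse logarithmic Sobolev inequality along the heat flow on ℝⁿ (curvature `CD(0,∞)`):
`t ‖∇ P_t f‖² / P_t f ≤ P_t(f log f) - P_t f log P_t f`. -/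
theorem reverse_log_sobolev_heat (n : ℕ) (hn : 1 ≤ n) (t : ℝ) (ht : 0 < t)
    (f : EuclideanSpace ℝ (Fin n) → ℝ) (hf : Measurable f)
    (ε M : ℝ) (hε : 0 < ε) (hεM : ε ≤ M) (hfb : ∀ z, ε ≤ f z ∧ f z ≤ M)
    (x : EuclideanSpace ℝ (Fin n)) :
    t * ‖gradient (heatSG n t f) x‖ ^ 2 / heatSG n t f x ≤
      heatSG n t (fun z => f z * Real.log (f z)) x -
        heatSG n t f x * Real.log (heatSG n t f x) := by
  have habs : ∀ z, |f z| ≤ M := fun z => abs_le.mpr ⟨by linarith [(hfb z).1], (hfb z).2⟩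
  have hC : (0:ℝ) < (4 * π * t) ^ (-(n : ℝ) / 2) := C_pos ht
  have hc : 0 < heatSG n t f x := lt_of_lt_of_le hε (heatSG_ge ht hf hε hfb x)
  have hD := heat_int_hasFDerivAt ht hf habs x
  have hDf : HasFDerivAt (heatSG n t f)
      ((4 * π * t) ^ (-(n : ℝ) / 2) • ∫ z : EuclideanSpace ℝ (Fin n),
        (f z * rexp (-‖x - z‖ ^ 2 / (4 * t)) * (2 * t)⁻¹) • (innerSL ℝ (z - x))) x :=
    hD.const_mul _
  have hgrad : gradient (heatSG n t f) x = (InnerProductSpace.toDual ℝ _).symm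
      ((4 * π * t) ^ (-(n : ℝ) / 2) • ∫ z : EuclideanSpace ℝ (Fin n),
        (f z * rexp (-‖x - z‖ ^ 2 / (4 * t)) * (2 * t)⁻¹) • (innerSL ℝ (z - x))) := by
    rw [gradient, hDf.fderiv]
  have claim : ∀ w : EuclideanSpace ℝ (Fin n),
      (inner ℝ (gradient (heatSG n t f) x) w : ℝ)
        ≤ (heatSG n t (fun z => f z * Real.log (f z)) x
            - heatSG n t f x * Real.log (heatSG n t f x))
          + heatSG n t f x * (‖w‖ ^ 2 / (4 * t)) := by
    intro w
    have h1 : (inner ℝ (gradient (heatSG n t f) x) w : ℝ)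
        = ((4 * π * t) ^ (-(n : ℝ) / 2) • ∫ z : EuclideanSpace ℝ (Fin n),
            (f z * rexp (-‖x - z‖ ^ 2 / (4 * t)) * (2 * t)⁻¹) • (innerSL ℝ (z - x))) w := by
      rw [hgrad]; exact InnerProductSpace.toDual_symm_apply
    have h3 : (∫ z : EuclideanSpace ℝ (Fin n),
        (f z * rexp (-‖x - z‖ ^ 2 / (4 * t)) * (2 * t)⁻¹) • (innerSL ℝ (z - x))) w
        = ∫ z : EuclideanSpace ℝ (Fin n),
          ((f z * rexp (-‖x - z‖ ^ 2 / (4 * t)) * (2 * t)⁻¹) • (innerSL ℝ (z - x))) w :=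
      ContinuousLinearMap.integral_apply (integrable_Fprime ht hf habs x) w
    have h4 : (fun z : EuclideanSpace ℝ (Fin n) =>
        ((f z * rexp (-‖x - z‖ ^ 2 / (4 * t)) * (2 * t)⁻¹) • (innerSL ℝ (z - x))) w)
        = fun z : EuclideanSpace ℝ (Fin n) =>
          f z * ((inner ℝ (z - x) w : ℝ) / (2 * t)) * rexp (-‖x - z‖ ^ 2 / (4 * t)) := by
      funext z
      simp only [ContinuousLinearMap.smul_apply, innerSL_apply_apply, smul_eq_mul]
      ring
    rw [h1, ContinuousLinearMap.smul_apply, h3, h4, smul_eq_mul]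
    exact core_ineq ht hf hε hfb x w
  -- optimization with w = (2t/c) • G
  set G := gradient (heatSG n t f) x with hG
  set c := heatSG n t f x with hcdef
  have hw := claim ((2 * t / c) • G)
  have hinner : (inner ℝ G ((2 * t / c) • G) : ℝ) = (2 * t / c) * ‖G‖ ^ 2 := by
    rw [real_inner_smul_right, real_inner_self_eq_norm_sq]
  have hnorm : ‖(2 * t / c) • G‖ ^ 2 = (2 * t / c) ^ 2 * ‖G‖ ^ 2 := by
    rw [norm_smul, mul_pow, Real.norm_eq_abs, sq_abs]
  rw [hinner, hnorm] at hw
  have harith : c * ((2 * t / c) ^ 2 * ‖G‖ ^ 2 / (4 * t)) = t * ‖G‖ ^ 2 / c := by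
    field_simp
    ring
  rw [harith] at hw
  have h2 : (2 * t / c) * ‖G‖ ^ 2 = 2 * (t * ‖G‖ ^ 2 / c) := by
    field_simp
  rw [h2] at hw
  linarith [hw]
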